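/- arXiv:1912.06743 — 2 statements merged into one kernel-verified Lean document; each statement's English description precedes it below -/
import Mathlib

section
/- With κ = κ^L_1 the alternating bilinear map on V = ℂ^{2n} defined by κ(x_i,x_j) = a_1(x_i−x_j)+b_1(y_i−y_j) for i ≠ j (and the remaining values as in the doubled-permutation definition), for any three distinct indices i, j, k the cyclic sum κ(x_i, κ(x_j,x_k)) + κ(x_j, κ(x_k,x_i)) + κ(x_k, κ(x_i,x_j)) equals 0, and likewise the cyclic sum with y's in place of x's equals 0. -/
noncomputable section

/-- The doubled permutation representation space `V = ℂ^n ⊕ ℂ^n`. -/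
abbrev DV (n : ℕ) := (Fin n → ℂ) × (Fin n → ℂ)

/-- The action of `σ ∈ Sₙ` on `V = ℂ^n ⊕ ℂ^n`, permuting coordinates in both summands. -/
def act {n : ℕ} (σ : Equiv.Perm (Fin n)) : DV n →ₗ[ℂ] DV n where
  toFun p := (p.1 ∘ σ.symm, p.2 ∘ σ.symm)
  map_add' p q := by ext m <;> simp
  map_smul' c p := by ext m <;> simp

/-- The basis vector `xᵢ`. -/
def xv {n : ℕ} (i : Fin n) : DV n := (Pi.single i 1, 0)

/-- The basis vector `yᵢ`. -/
def yv {n : ℕ} (i : Fin n) : DV n := (0, Pi.single i 1)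

/-! The cyclic sum `κ(eᵢ, κ(eⱼ, eₖ)) + …` vanishes because, once `κ(eⱼ, eₖ) = dⱼ - dₖ` is
substituted, it becomes `∑_cyc (f i j - f i k)` with `f p q = κ(e_p, d_q)`, and every such `f`
that splits off the diagonal as `g p + h q + c` has vanishing cyclic sum. For `e = x` this
splitting comes from the formulas for `κ(xᵢ, xⱼ)` and `κ(xᵢ, yⱼ)`; for `e = y` from those for
`κ(yᵢ, yⱼ)` and, through skew-symmetry, `κ(xⱼ, yᵢ)`. -/

section OffDiagSeparable

variable {ι N : Type*} [AddCommGroup N]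

def OffDiagSeparable (f : ι → ι → N) : Prop :=
  ∃ (g h : ι → N) (c : N), ∀ p q, p ≠ q → f p q = g p + h q + c

namespace OffDiagSeparable

theorem of_eq_sub {f : ι → ι → N} (d : ι → N) (hf : ∀ p q, p ≠ q → f p q = d p - d q) :
    OffDiagSeparable f :=
  ⟨d, -d, 0, fun p q hpq => by rw [hf p q hpq, Pi.neg_apply, add_zero, sub_eq_add_neg]⟩

theorem add {f f' : ι → ι → N} (hf : OffDiagSeparable f) (hf' : OffDiagSeparable f') :
    OffDiagSeparable fun p q => f p q + f' p q := by
  obtain ⟨g, h, c, hf⟩ := hf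
  obtain ⟨g', h', c', hf'⟩ := hf'
  exact ⟨g + g', h + h', c + c', fun p q hpq => by
    dsimp only
    rw [hf p q hpq, hf' p q hpq, Pi.add_apply, Pi.add_apply]; abel⟩

theorem smul {R : Type*} [DistribSMul R N] {f : ι → ι → N} (hf : OffDiagSeparable f) (a : R) :
    OffDiagSeparable fun p q => a • f p q := by
  obtain ⟨g, h, c, hf⟩ := hf
  exact ⟨a • g, a • h, a • c, fun p q hpq => by
    dsimp only
    rw [hf p q hpq, smul_add, smul_add, Pi.smul_apply, Pi.smul_apply]⟩

theorem neg_swap {f : ι → ι → N} (hf : OffDiagSeparable f) :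
    OffDiagSeparable fun p q => -f q p := by
  obtain ⟨g, h, c, hf⟩ := hf
  exact ⟨-h, -g, -c, fun p q hpq => by
    dsimp only
    rw [hf q p hpq.symm, Pi.neg_apply, Pi.neg_apply]; abel⟩

theorem cyclic_sum_sub_eq_zero {f : ι → ι → N} (hf : OffDiagSeparable f) {i j k : ι}
    (hij : i ≠ j) (hjk : j ≠ k) (hik : i ≠ k) :
    (f i j - f i k) + (f j k - f j i) + (f k i - f k j) = 0 := by
  obtain ⟨g, h, c, hf⟩ := hf
  rw [hf i j hij, hf i k hik, hf j k hjk, hf j i hij.symm, hf k i hik.symm, hf k j hjk.symm]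
  abel

end OffDiagSeparable

end OffDiagSeparable

theorem LinearMap.cyclic_sum_eq_zero_of_apply_eq_sub {ι R M : Type*} [CommSemiring R]
    [AddCommGroup M] [Module R M] (κ : M →ₗ[R] M →ₗ[R] M) (e d : ι → M)
    (hκ : ∀ p q, p ≠ q → κ (e p) (e q) = d p - d q)
    (hsep : OffDiagSeparable fun p q => κ (e p) (d q)) {i j k : ι}
    (hij : i ≠ j) (hjk : j ≠ k) (hik : i ≠ k) :
    κ (e i) (κ (e j) (e k)) + κ (e j) (κ (e k) (e i)) + κ (e k) (κ (e i) (e j)) = 0 := by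
  rw [hκ j k hjk, hκ k i hik.symm, hκ i j hij, map_sub, map_sub, map_sub]
  exact hsep.cyclic_sum_sub_eq_zero hij hjk hik

theorem kappaL1_cyclic_sum_xxx_yyy_general (n : ℕ)
    (a1 a2 a5 a6 a7 b1 b2 b5 b6 b7 : ℂ)
    (κ : DV n →ₗ[ℂ] DV n →ₗ[ℂ] DV n)
    (halt : ∀ v : DV n, κ v v = 0)
    (hxx : ∀ i j : Fin n, i ≠ j →
      κ (xv i) (xv j) = a1 • (xv i - xv j) + b1 • (yv i - yv j))
    (hyy : ∀ i j : Fin n, i ≠ j →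
      κ (yv i) (yv j) = a2 • (xv i - xv j) + b2 • (yv i - yv j))
    (hxyo : ∀ i j : Fin n, i ≠ j →
      κ (xv i) (yv j) = a5 • xv i + a6 • xv j + a7 • (∑ m, xv m)
        + b5 • yv i + b6 • yv j + b7 • (∑ m, yv m)) :
    ∀ i j k : Fin n, i ≠ j → j ≠ k → i ≠ k →
      (κ (xv i) (κ (xv j) (xv k)) + κ (xv j) (κ (xv k) (xv i))
          + κ (xv k) (κ (xv i) (xv j)) = 0) ∧
      (κ (yv i) (κ (yv j) (yv k)) + κ (yv j) (κ (yv k) (yv i))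
          + κ (yv k) (κ (yv i) (yv j)) = 0) := by
  intro i j k hij hjk hik
  set dx : Fin n → DV n := fun p => a1 • xv p + b1 • yv p
  set dy : Fin n → DV n := fun p => a2 • xv p + b2 • yv p
  have hdx : ∀ p q, p ≠ q → κ (xv p) (xv q) = dx p - dx q := fun p q hpq => by
    rw [hxx p q hpq]; module
  have hdy : ∀ p q, p ≠ q → κ (yv p) (yv q) = dy p - dy q := fun p q hpq => by
    rw [hyy p q hpq]; module
  have hxy : OffDiagSeparable fun p q => κ (xv p) (yv q) :=
    ⟨fun p => a5 • xv p + b5 • yv p, fun q => a6 • xv q + b6 • yv q,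
      a7 • ∑ m, xv m + b7 • ∑ m, yv m, fun p q hpq => by dsimp only; rw [hxyo p q hpq]; abel⟩
  refine ⟨κ.cyclic_sum_eq_zero_of_apply_eq_sub xv dx hdx ?_ hij hjk hik,
    κ.cyclic_sum_eq_zero_of_apply_eq_sub yv dy hdy ?_ hij hjk hik⟩
  · simp only [dx, map_add, map_smul]
    exact ((OffDiagSeparable.of_eq_sub dx hdx).smul a1).add (hxy.smul b1)
  · simp only [dy, map_add, map_smul, ← LinearMap.IsAlt.neg halt (xv _) (yv _)]
    exact (hxy.neg_swap.smul a2).add ((OffDiagSeparable.of_eq_sub dy hdy).smul b2)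

/-- For `κ = κ^L₁` the alternating bilinear map on `V = ℂ^{2n}` from the
doubled-permutation definition, for any three distinct indices `i, j, k` the cyclic sums
`κ(xᵢ, κ(xⱼ,xₖ)) + κ(xⱼ, κ(xₖ,xᵢ)) + κ(xₖ, κ(xᵢ,xⱼ))` and the analogous sum with `y`'s
both vanish. -/
theorem kappaL1_cyclic_sum_xxx_yyy (n : ℕ) (hn : 4 ≤ n)
    (a1 a2 a3 a4 a5 a6 a7 b1 b2 b3 b4 b5 b6 b7 : ℂ)
    (κ : DV n →ₗ[ℂ] DV n →ₗ[ℂ] DV n)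
    (halt : ∀ v : DV n, κ v v = 0)
    (hxx : ∀ i j : Fin n, i ≠ j →
      κ (xv i) (xv j) = a1 • (xv i - xv j) + b1 • (yv i - yv j))
    (hyy : ∀ i j : Fin n, i ≠ j →
      κ (yv i) (yv j) = a2 • (xv i - xv j) + b2 • (yv i - yv j))
    (hxyd : ∀ i : Fin n,
      κ (xv i) (yv i) = a3 • xv i + a4 • (∑ m, xv m) + b3 • yv i + b4 • (∑ m, yv m))
    (hxyo : ∀ i j : Fin n, i ≠ j →
      κ (xv i) (yv j) = a5 • xv i + a6 • xv j + a7 • (∑ m, xv m)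
        + b5 • yv i + b6 • yv j + b7 • (∑ m, yv m)) :
    ∀ i j k : Fin n, i ≠ j → j ≠ k → i ≠ k →
      (κ (xv i) (κ (xv j) (xv k)) + κ (xv j) (κ (xv k) (xv i))
          + κ (xv k) (κ (xv i) (xv j)) = 0) ∧
      (κ (yv i) (κ (yv j) (yv k)) + κ (yv j) (κ (yv k) (yv i))
          + κ (yv k) (κ (yv i) (yv j)) = 0) :=
  kappaL1_cyclic_sum_xxx_yyy_general n a1 a2 a5 a6 a7 b1 b2 b5 b6 b7 κ halt hxx hyy hxyo
end
end

section
/- Let κ^C_1 be the alternating bilinear form on V = ℂ^{2n} with κ^C_1(x_i,x_j) = κ^C_1(y_i,y_j) = 0, κ^C_1(x_i,y_i) = α, κ^C_1(x_i,y_j) = β for i ≠ j, and let κ^L_1 be as in the doubled-permutation definition with parameters a_1,…,a_7,b_1,…,b_7. Then for any three distinct indices i, j, k, the cyclic sum κ^C_1(x_i, κ^L_1(x_j,y_k)) + κ^C_1(x_j, κ^L_1(y_k,x_i)) + κ^C_1(y_k, κ^L_1(x_i,x_j)) equals 0. -/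
noncomputable section

/-!
Every term of the cyclic sum is computed by bilinearity. In the first two terms only the
`y`-components of `κ^L₁(xⱼ, yₖ)` and `κ^L₁(xᵢ, yₖ)` survive pairing with `xᵢ` and `xⱼ`
respectively, and both pairings give the same value `(b₅ + b₆) β + b₇ (α + (n - 1) β)`; the
second term enters with a sign because `κ^L₁` is alternating, so the two cancel. In the third
term `κ^C₁(yₖ, xᵢ - xⱼ) = -β + β` and `κ^C₁(yₖ, yᵢ - yⱼ) = 0`.
-/

theorem Finset.sum_eq_add_card_sub_one_mul {ι R : Type*} [Fintype ι] [DecidableEq ι] [Ring R]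
    (f : ι → R) (p : ι) (α β : R) (hp : f p = α) (hne : ∀ m, p ≠ m → f m = β) :
    ∑ m, f m = α + ((Fintype.card ι : R) - 1) * β := by
  rw [← Finset.add_sum_erase _ _ (Finset.mem_univ p), hp,
    Finset.sum_congr rfl fun m hm => hne m (Finset.ne_of_mem_erase hm).symm,
    Finset.sum_const, Finset.card_erase_of_mem (Finset.mem_univ p), Finset.card_univ,
    nsmul_eq_mul, Nat.cast_pred (Fintype.card_pos_iff.mpr ⟨p⟩)]

section

variable {n : ℕ}

theorem kappaC_xv_sum_xv {κC : DV n →ₗ[ℂ] DV n →ₗ[ℂ] ℂ}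
    (hcxx : ∀ i j : Fin n, κC (xv i) (xv j) = 0) (p : Fin n) :
    κC (xv p) (∑ m, xv m) = 0 := by
  simp only [map_sum, hcxx, Finset.sum_const_zero]

theorem kappaC_xv_sum_yv {κC : DV n →ₗ[ℂ] DV n →ₗ[ℂ] ℂ} {α β : ℂ}
    (hcxyd : ∀ i : Fin n, κC (xv i) (yv i) = α)
    (hcxyo : ∀ i j : Fin n, i ≠ j → κC (xv i) (yv j) = β) (p : Fin n) :
    κC (xv p) (∑ m, yv m) = α + ((n : ℂ) - 1) * β := by
  rw [map_sum, Finset.sum_eq_add_card_sub_one_mul _ p α β (hcxyd p) (hcxyo p), Fintype.card_fin]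

theorem kappaC_xv_kappaL_xv_yv {κL : DV n →ₗ[ℂ] DV n →ₗ[ℂ] DV n}
    {κC : DV n →ₗ[ℂ] DV n →ₗ[ℂ] ℂ} {a5 a6 a7 b5 b6 b7 α β : ℂ}
    (hxyo : ∀ i j : Fin n, i ≠ j →
      κL (xv i) (yv j) = a5 • xv i + a6 • xv j + a7 • (∑ m, xv m)
        + b5 • yv i + b6 • yv j + b7 • (∑ m, yv m))
    (hcxx : ∀ i j : Fin n, κC (xv i) (xv j) = 0)
    (hcxyd : ∀ i : Fin n, κC (xv i) (yv i) = α)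
    (hcxyo : ∀ i j : Fin n, i ≠ j → κC (xv i) (yv j) = β)
    {p i k : Fin n} (hpi : p ≠ i) (hpk : p ≠ k) (hik : i ≠ k) :
    κC (xv p) (κL (xv i) (yv k)) = (b5 + b6) * β + b7 * (α + ((n : ℂ) - 1) * β) := by
  rw [hxyo i k hik]
  simp only [map_add, map_smul, smul_eq_mul, hcxx, kappaC_xv_sum_xv hcxx,
    kappaC_xv_sum_yv hcxyd hcxyo, hcxyo p i hpi, hcxyo p k hpk]
  ring

theorem kappaC_yv_kappaL_xv_xv {κL : DV n →ₗ[ℂ] DV n →ₗ[ℂ] DV n}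
    {κC : DV n →ₗ[ℂ] DV n →ₗ[ℂ] ℂ} {a1 b1 β : ℂ}
    (hxx : ∀ i j : Fin n, i ≠ j →
      κL (xv i) (xv j) = a1 • (xv i - xv j) + b1 • (yv i - yv j))
    (haltC : κC.IsAlt) (hcyy : ∀ i j : Fin n, κC (yv i) (yv j) = 0)
    (hcxyo : ∀ i j : Fin n, i ≠ j → κC (xv i) (yv j) = β)
    {i j k : Fin n} (hij : i ≠ j) (hik : i ≠ k) (hjk : j ≠ k) :
    κC (yv k) (κL (xv i) (xv j)) = 0 := by
  rw [hxx i j hij]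
  simp only [map_add, map_sub, map_smul, smul_eq_mul, hcyy, ← haltC.neg (xv _),
    hcxyo i k hik, hcxyo j k hjk]
  ring

end

theorem kappaC1_kappaL1_cyclic_sum_xxy_general (n : ℕ)
    (a1 a5 a6 a7 b1 b5 b6 b7 α β : ℂ)
    (κL : DV n →ₗ[ℂ] DV n →ₗ[ℂ] DV n)
    (haltL : ∀ v : DV n, κL v v = 0)
    (hxx : ∀ i j : Fin n, i ≠ j →
      κL (xv i) (xv j) = a1 • (xv i - xv j) + b1 • (yv i - yv j))
    (hxyo : ∀ i j : Fin n, i ≠ j →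
      κL (xv i) (yv j) = a5 • xv i + a6 • xv j + a7 • (∑ m, xv m)
        + b5 • yv i + b6 • yv j + b7 • (∑ m, yv m))
    (κC : DV n →ₗ[ℂ] DV n →ₗ[ℂ] ℂ)
    (haltC : ∀ v : DV n, κC v v = 0)
    (hcxx : ∀ i j : Fin n, κC (xv i) (xv j) = 0)
    (hcyy : ∀ i j : Fin n, κC (yv i) (yv j) = 0)
    (hcxyd : ∀ i : Fin n, κC (xv i) (yv i) = α)
    (hcxyo : ∀ i j : Fin n, i ≠ j → κC (xv i) (yv j) = β) :
    ∀ i j k : Fin n, i ≠ j → j ≠ k → i ≠ k →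
      κC (xv i) (κL (xv j) (yv k)) + κC (xv j) (κL (yv k) (xv i))
        + κC (yv k) (κL (xv i) (xv j)) = 0 := by
  intro i j k hij hjk hik
  rw [← LinearMap.IsAlt.neg (B := κL) haltL (xv i) (yv k), map_neg,
    kappaC_xv_kappaL_xv_yv hxyo hcxx hcxyd hcxyo hij hik hjk,
    kappaC_xv_kappaL_xv_yv hxyo hcxx hcxyd hcxyo hij.symm hjk hik,
    kappaC_yv_kappaL_xv_xv hxx haltC hcyy hcxyo hij hik hjk]
  ring

/-- With `κ^C₁` and `κ^L₁` as in the doubled-permutation definitions, for any three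
distinct indices `i, j, k` the cyclic sum
`κ^C₁(xᵢ, κ^L₁(xⱼ,yₖ)) + κ^C₁(xⱼ, κ^L₁(yₖ,xᵢ)) + κ^C₁(yₖ, κ^L₁(xᵢ,xⱼ))` vanishes. -/
theorem kappaC1_kappaL1_cyclic_sum_xxy (n : ℕ) (hn : 4 ≤ n)
    (a1 a2 a3 a4 a5 a6 a7 b1 b2 b3 b4 b5 b6 b7 α β : ℂ)
    (κL : DV n →ₗ[ℂ] DV n →ₗ[ℂ] DV n)
    (haltL : ∀ v : DV n, κL v v = 0)
    (hxx : ∀ i j : Fin n, i ≠ j →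
      κL (xv i) (xv j) = a1 • (xv i - xv j) + b1 • (yv i - yv j))
    (hyy : ∀ i j : Fin n, i ≠ j →
      κL (yv i) (yv j) = a2 • (xv i - xv j) + b2 • (yv i - yv j))
    (hxyd : ∀ i : Fin n,
      κL (xv i) (yv i) = a3 • xv i + a4 • (∑ m, xv m) + b3 • yv i + b4 • (∑ m, yv m))
    (hxyo : ∀ i j : Fin n, i ≠ j →
      κL (xv i) (yv j) = a5 • xv i + a6 • xv j + a7 • (∑ m, xv m)
        + b5 • yv i + b6 • yv j + b7 • (∑ m, yv m))
    (κC : DV n →ₗ[ℂ] DV n →ₗ[ℂ] ℂ)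
    (haltC : ∀ v : DV n, κC v v = 0)
    (hcxx : ∀ i j : Fin n, κC (xv i) (xv j) = 0)
    (hcyy : ∀ i j : Fin n, κC (yv i) (yv j) = 0)
    (hcxyd : ∀ i : Fin n, κC (xv i) (yv i) = α)
    (hcxyo : ∀ i j : Fin n, i ≠ j → κC (xv i) (yv j) = β) :
    ∀ i j k : Fin n, i ≠ j → j ≠ k → i ≠ k →
      κC (xv i) (κL (xv j) (yv k)) + κC (xv j) (κL (yv k) (xv i))
        + κC (yv k) (κL (xv i) (xv j)) = 0 :=
  kappaC1_kappaL1_cyclic_sum_xxy_general n a1 a5 a6 a7 b1 b5 b6 b7 α β κL haltL hxx hxyo κC haltC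
    hcxx hcyy hcxyd hcxyo
end
end
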